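/- Let G be a finite non-nilpotent group with nil(G) = 1 such that |nil_G(x)| = |nil_G(y)| for all nontrivial x, y ∈ G. If a, b ∈ G are nontrivial commuting elements with coprime orders, then nil_G(a) = nil_G(b) = nil_G(ab). -/

import Mathlib

def nilizer {G : Type*} [Group G] (x : G) : Set G :=
  {g | Group.IsNilpotent (Subgroup.closure ({x, g} : Set G))}

def nilSet (G : Type*) [Group G] : Set G :=
  {x | ∀ y : G, Group.IsNilpotent (Subgroup.closure ({x, y} : Set G))}

/-!
If `a` and `b` commute and have coprime orders, then `a` and `b` are powers of `a * b`, so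
`⟨a, g⟩ ≤ ⟨a * b, g⟩` and `⟨b, g⟩ ≤ ⟨a * b, g⟩` for every `g`. Since subgroups of nilpotent groups
are nilpotent, `nil_G(ab)` is contained in both `nil_G(a)` and `nil_G(b)`, and as all three sets
have the same finite size, the inclusions are equalities.
-/

open Subgroup

theorem Subgroup.isNilpotent_of_le {G : Type*} [Group G] {H K : Subgroup G} (h : H ≤ K)
    (hK : Group.IsNilpotent K) : Group.IsNilpotent H :=
  have : Group.IsNilpotent (H.subgroupOf K) := Subgroup.isNilpotent _
  Group.nilpotent_of_mulEquiv (subgroupOfEquivOfLe h)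

theorem Commute.mem_zpowers_mul_of_coprime {G : Type*} [Group G] {a b : G} (hab : Commute a b)
    (hcop : (orderOf a).Coprime (orderOf b)) : a ∈ zpowers (a * b) := by
  obtain ⟨m, hm⟩ := exists_pow_eq_self_of_coprime hcop.symm
  have hpow : ((a * b) ^ orderOf b) ^ m = a := by
    rw [hab.mul_pow, pow_orderOf_eq_one, mul_one, hm]
  have hmem : ((a * b) ^ orderOf b) ^ m ∈ zpowers (a * b) := pow_mem (pow_mem (mem_zpowers _) _) _
  rwa [hpow] at hmem

theorem Commute.mul_ne_one_of_coprime {G : Type*} [Group G] {a b : G} (hab : Commute a b)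
    (hcop : (orderOf a).Coprime (orderOf b)) (ha : a ≠ 1) : a * b ≠ 1 := by
  intro h
  have hmem := hab.mem_zpowers_mul_of_coprime hcop
  rw [h, zpowers_one_eq_bot, mem_bot] at hmem
  exact ha hmem

theorem nilizer_subset_of_mem_zpowers {G : Type*} [Group G] {a c : G} (h : a ∈ zpowers c) :
    nilizer c ⊆ nilizer a := by
  intro g hg
  refine isNilpotent_of_le ?_ hg
  rw [closure_le, Set.insert_subset_iff, Set.singleton_subset_iff]
  exact ⟨zpowers_le.mpr (subset_closure (by simp)) h, subset_closure (by simp)⟩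

theorem nilizer_eq_of_mem_zpowers {G : Type*} [Group G] [Finite G] {a c : G}
    (h : a ∈ zpowers c) (hcard : (nilizer a).ncard ≤ (nilizer c).ncard) :
    nilizer c = nilizer a :=
  Set.eq_of_subset_of_ncard_le (nilizer_subset_of_mem_zpowers h) hcard (Set.toFinite _)

theorem stmt14_general {G : Type*} [Group G] [Finite G]
    (hreg : ∀ x y : G, x ≠ 1 → y ≠ 1 → (nilizer x).ncard = (nilizer y).ncard)
    (a b : G) (ha : a ≠ 1) (hb : b ≠ 1) (hcomm : a * b = b * a)
    (hcop : Nat.Coprime (orderOf a) (orderOf b)) :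
    nilizer a = nilizer b ∧ nilizer b = nilizer (a * b) := by
  have hab : Commute a b := hcomm
  have hab1 : a * b ≠ 1 := hab.mul_ne_one_of_coprime hcop ha
  have hea : nilizer (a * b) = nilizer a :=
    nilizer_eq_of_mem_zpowers (hab.mem_zpowers_mul_of_coprime hcop) (hreg a _ ha hab1).le
  have heb : nilizer (a * b) = nilizer b := by
    have hbmem := hab.symm.mem_zpowers_mul_of_coprime hcop.symm
    rw [← hcomm] at hbmem
    exact nilizer_eq_of_mem_zpowers hbmem (hreg b _ hb hab1).le
  exact ⟨hea ▸ heb, heb.symm⟩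

theorem stmt14 {G : Type*} [Group G] [Finite G]
    (hnn : ¬ Group.IsNilpotent G) (hnil : nilSet G = {1})
    (hreg : ∀ x y : G, x ≠ 1 → y ≠ 1 → (nilizer x).ncard = (nilizer y).ncard)
    (a b : G) (ha : a ≠ 1) (hb : b ≠ 1) (hcomm : a * b = b * a)
    (hcop : Nat.Coprime (orderOf a) (orderOf b)) :
    nilizer a = nilizer b ∧ nilizer b = nilizer (a * b) :=
  stmt14_general hreg a b ha hb hcomm hcop
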